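/- arXiv:1402.3532 — 3 statements merged into one kernel-verified Lean document; each statement's English description precedes it below -/
import Mathlib

section
/- Let K be a field and n ≥ 1. The toric ring K[B_n] = K[t_1 s, ..., t_n s, t_1^{-1} s, ..., t_n^{-1} s] ⊆ K[s, t_1^{±1}, ..., t_n^{±1}] is strongly Koszul. -/
/-!
Common definitions: toric ideals/rings of monomial families, strong Koszulness
with respect to a system of algebra generators, initial ideals with respect to
a relation on exponent vectors, (reduced) Gröbner bases, the (graded) reverse
lexicographic order induced by an ordering of the variables, minimal monomial
generators, and compressedness.
-/

open MvPolynomial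

noncomputable section

/-- The total degree of an exponent vector. -/
def expDeg {n : ℕ} (d : Fin n →₀ ℕ) : ℕ := d.sum fun _ e => e

/-- The toric ideal `I_A ⊆ K[x_1,…,x_n]` of the family of monomials
`u i = t^(a i)` in `K[t_1,…,t_d]`: the kernel of `π : x_i ↦ u_i`. -/
def toricIdeal (K : Type) [Field K] {n d : ℕ} (a : Fin n → (Fin d →₀ ℕ)) :
    Ideal (MvPolynomial (Fin n) K) :=
  RingHom.ker (MvPolynomial.aeval
    (fun i => (MvPolynomial.monomial (a i) (1 : K) : MvPolynomial (Fin d) K)) :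
      MvPolynomial (Fin n) K →ₐ[K] MvPolynomial (Fin d) K).toRingHom

/-- The toric ring `K[A] ⊆ K[t_1,…,t_d]` generated by the monomials `t^(a i)`. -/
def toricRing (K : Type) [Field K] {n d : ℕ} (a : Fin n → (Fin d →₀ ℕ)) :
    Subalgebra K (MvPolynomial (Fin d) K) :=
  Algebra.adjoin K (Set.range fun i => (MvPolynomial.monomial (a i) (1 : K)))

/-- The generator `u_i = t^(a i)`, as an element of the toric ring `K[A]`. -/
def toricGen (K : Type) [Field K] {n d : ℕ} (a : Fin n → (Fin d →₀ ℕ)) (i : Fin n) :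
    toricRing K a :=
  ⟨MvPolynomial.monomial (a i) (1 : K), Algebra.subset_adjoin (Set.mem_range_self i)⟩

/-- A commutative ring `R` is strongly Koszul with respect to the system of
generators `u_1,…,u_n` (of its maximal graded ideal) if for every chain
`i_1 < i_2 < ⋯ < i_r` of indices and every `j = 1,…,r` the colon ideal
`(u_{i_1},…,u_{i_{j-1}}) : u_{i_j}` is generated by a subset of `{u_1,…,u_n}`. -/
def StronglyKoszulWith {R : Type} [CommRing R] {n : ℕ} (u : Fin n → R) : Prop :=
  ∀ (r : ℕ) (c : Fin r → Fin n), StrictMono c → ∀ j : Fin r,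
    ∃ S : Set R, S ⊆ Set.range u ∧
      Submodule.colon (Ideal.span ((fun k => u (c k)) '' {k : Fin r | k < j}))
        (Ideal.span {u (c j)}) = Ideal.span S

/-- The toric ring `K[A]` is strongly Koszul (with respect to its monomial
generators `u_1,…,u_n`, which form its distinguished minimal system of
generators of the same degree). -/
def ToricStronglyKoszul (K : Type) [Field K] {n d : ℕ} (a : Fin n → (Fin d →₀ ℕ)) : Prop :=
  StronglyKoszulWith (toricGen K a)

/-- `dd` is the exponent vector of the initial (leading) monomial of `f` with
respect to the strict comparison `lt` on exponent vectors. -/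
def IsInitialExp {K : Type} [Field K] {n : ℕ}
    (lt : (Fin n →₀ ℕ) → (Fin n →₀ ℕ) → Prop)
    (f : MvPolynomial (Fin n) K) (dd : Fin n →₀ ℕ) : Prop :=
  dd ∈ f.support ∧ ∀ d' ∈ f.support, d' ≠ dd → lt d' dd

/-- The initial ideal `in_lt(I)`: the monomial ideal generated by the initial
monomials of the nonzero elements of `I`. -/
def initialIdeal {K : Type} [Field K] {n : ℕ}
    (lt : (Fin n →₀ ℕ) → (Fin n →₀ ℕ) → Prop)
    (I : Ideal (MvPolynomial (Fin n) K)) : Ideal (MvPolynomial (Fin n) K) :=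
  Ideal.span {m | ∃ f ∈ I, ∃ dd, IsInitialExp lt f dd ∧
    m = MvPolynomial.monomial dd (1 : K)}

/-- `G` is the reduced Gröbner basis of `I` with respect to the strict
comparison `lt` (coming from a monomial order): the elements of `G` lie in `I`,
are monic, their initial monomials generate the initial ideal of `I`,
and no monomial occurring in an element of `G` is divisible by the initial
monomial of another element of `G`. -/
def IsReducedGB {K : Type} [Field K] {n : ℕ}
    (lt : (Fin n →₀ ℕ) → (Fin n →₀ ℕ) → Prop)
    (I : Ideal (MvPolynomial (Fin n) K)) (G : Finset (MvPolynomial (Fin n) K)) : Prop :=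
  (∀ g ∈ G, g ∈ I) ∧
  (∀ g ∈ G, ∃ dd, IsInitialExp lt g dd ∧ MvPolynomial.coeff dd g = 1) ∧
  (initialIdeal lt I =
    Ideal.span {m | ∃ g ∈ G, ∃ dd, IsInitialExp lt g dd ∧
      m = MvPolynomial.monomial dd (1 : K)}) ∧
  (∀ g ∈ G, ∀ g' ∈ G, g' ≠ g → ∀ d' ∈ g.support, ∀ dd, IsInitialExp lt g' dd → ¬ dd ≤ d')

/-- The strict comparison of the (graded) reverse lexicographic order induced by
the ordering `x_{ord 0} < x_{ord 1} < ⋯ < x_{ord (n-1)}` of the variables: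
`x < y` iff `deg x < deg y`, or the degrees agree and `x` has a strictly larger
exponent than `y` at the smallest variable where they differ. -/
def rlexLT {n : ℕ} (ord : Fin n ≃ Fin n) (x y : Fin n →₀ ℕ) : Prop :=
  expDeg x < expDeg y ∨ (expDeg x = expDeg y ∧
    ∃ p : Fin n, y (ord p) < x (ord p) ∧ ∀ q : Fin n, q < p → x (ord q) = y (ord q))

/-- `dd` is (the exponent vector of) a member of `G(I)`, the minimal system of
monomial generators of the monomial ideal `I`: the monomial `x^dd` lies in `I`
but no proper divisor of it does. -/
def IsMinGen {K : Type} [Field K] {n : ℕ} (I : Ideal (MvPolynomial (Fin n) K))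
    (dd : Fin n →₀ ℕ) : Prop :=
  MvPolynomial.monomial dd (1 : K) ∈ I ∧
  ∀ d' : Fin n →₀ ℕ, d' ≤ dd → d' ≠ dd → MvPolynomial.monomial d' (1 : K) ∉ I

/-- The toric ring `K[A]` is compressed: the initial ideal of `I_A` is radical
for every reverse lexicographic order. -/
def ToricCompressed (K : Type) [Field K] {n d : ℕ} (a : Fin n → (Fin d →₀ ℕ)) : Prop :=
  ∀ ord : Fin n ≃ Fin n,
    (initialIdeal (rlexLT ord) (toricIdeal K a)).radical
      = initialIdeal (rlexLT ord) (toricIdeal K a)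

/-- The strict comparison on exponent vectors associated to a monomial order. -/
def MonomialOrder.ltRel {σ : Type*} (m : MonomialOrder σ) :
    (σ →₀ ℕ) → (σ →₀ ℕ) → Prop :=
  fun a b => m.toSyn a < m.toSyn b

/-- A quadratic binomial: a difference of two (monic) monomials of degree 2. -/
def IsQuadBinomial {K : Type} [Field K] {n : ℕ} (g : MvPolynomial (Fin n) K) : Prop :=
  ∃ b c : Fin n →₀ ℕ, expDeg b = 2 ∧ expDeg c = 2 ∧
    g = MvPolynomial.monomial b (1 : K) - MvPolynomial.monomial c (1 : K)

end

open MvPolynomial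

noncomputable section

/-- Exponents of Laurent monomials in `K[s, t_1^{±1}, …, t_n^{±1}]`:
the `s`-exponent (in `ℕ`) together with the `t`-exponents (in `ℤ`). -/
abbrev LaurentExp (n : ℕ) := ℕ × (Fin n →₀ ℤ)

/-- The Laurent polynomial ring `K[s, t_1^{±1}, …, t_n^{±1}]`. -/
abbrev LaurentRing (K : Type) [Field K] (n : ℕ) := AddMonoidAlgebra K (LaurentExp n)

/-- The exponent vectors of the monomials
`B_n = {t_1 s, …, t_n s, t_1⁻¹ s, …, t_n⁻¹ s}`: index `i` with `0 ≤ i < n`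
gives `t_{i+1} s`, and index `n + i` gives `t_{i+1}⁻¹ s`. -/
def expB (n : ℕ) (m : Fin (2 * n)) : LaurentExp n :=
  if hx : (m : ℕ) < n then (1, Finsupp.single ⟨(m : ℕ), hx⟩ 1)
  else (1, - Finsupp.single ⟨(m : ℕ) - n, by have := m.isLt; omega⟩ 1)

/-- The toric ring `K[B_n] = K[t_1 s, …, t_n s, t_1⁻¹ s, …, t_n⁻¹ s]`,
as a subalgebra of the Laurent polynomial ring. -/
def ringB (K : Type) [Field K] (n : ℕ) : Subalgebra K (LaurentRing K n) :=
  Algebra.adjoin K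
    (Set.range fun v => (AddMonoidAlgebra.single (expB n v) (1 : K) : LaurentRing K n))

/-- The generators of `K[B_n]`, as elements of `K[B_n]`. -/
def ringBGen (K : Type) [Field K] (n : ℕ) (v : Fin (2 * n)) : ringB K n :=
  ⟨AddMonoidAlgebra.single (expB n v) (1 : K),
    Algebra.subset_adjoin (Set.mem_range_self v)⟩

/-!
The exponents of the monomials of `K[B_n]` form the monoid
`M = {(d, a) ∈ ℕ × ℤⁿ | |a|₁ ≤ d, |a|₁ ≡ d mod 2}`, and the ideal generated by the `u_v = x^(b_v)`,
`v ∈ S`, consists of the elements all of whose exponents lie in some `b_v + M`.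
Let `w ∉ S` and `x^m u_w ∈ (u_v | v ∈ S)`, so that `m + b_w = b_v + p` with `v ∈ S`, `p ∈ M`.
If adding `b_w` lowers the `ℓ¹`-norm of the `t`-part of `m`, then `m - b_w̄ ∈ M`, where `u_w̄` is
the generator with the inverse `t`-part; otherwise the norm bound on `p` gives `m - b_v ∈ M`.
As `u_w̄ u_w = s² = u_v̄ u_v`, the colon ideal `(u_v | v ∈ S) : u_w` is generated by the `u_v`,
`v ∈ S`, together with `u_w̄` when `S ≠ ∅`.
-/

namespace AddMonoidAlgebra

variable {K G ι : Type*} [CommSemiring K] [AddCommMonoid G]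

variable (K) in
def monomialSubalgebra (e : ι → G) : Subalgebra K K[G] :=
  Algebra.adjoin K (Set.range fun i => single (e i) (1 : K))

variable (K) in
def monomialGen (e : ι → G) (i : ι) : monomialSubalgebra K e :=
  ⟨single (e i) 1, Algebra.subset_adjoin (Set.mem_range_self i)⟩

variable {e : ι → G}

theorem single_mem_monomialSubalgebra {g : G} (hg : g ∈ AddSubmonoid.closure (Set.range e))
    (r : K) : single g r ∈ monomialSubalgebra K e := by
  suffices single g (1 : K) ∈ monomialSubalgebra K e by
    simpa [smul_single] using Subalgebra.smul_mem _ this r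
  induction hg using AddSubmonoid.closure_induction with
  | mem g hg => exact Algebra.subset_adjoin (by obtain ⟨i, rfl⟩ := hg; exact ⟨i, rfl⟩)
  | zero => exact one_mem _
  | add g h _ _ hg hh => simpa [single_mul_single] using mul_mem hg hh

theorem mem_monomialSubalgebra_iff {f : K[G]} : f ∈ monomialSubalgebra K e ↔
    ∀ g ∈ f.coeff.support, g ∈ AddSubmonoid.closure (Set.range e) := by
  classical
  refine ⟨fun hf => ?_, fun hf => ?_⟩
  · induction hf using Algebra.adjoin_induction with
    | mem f hf =>
      obtain ⟨i, rfl⟩ := hf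
      intro g hg
      rw [Finset.mem_singleton.1 (Finsupp.support_single_subset hg)]
      exact AddSubmonoid.subset_closure ⟨i, rfl⟩
    | algebraMap r =>
      intro g hg
      rw [Finset.mem_singleton.1 (Finsupp.support_single_subset hg)]
      exact zero_mem _
    | add f f' _ _ hf hf' =>
      intro g hg
      exact (Finset.mem_union.1 (Finsupp.support_add hg)).elim (hf g) (hf' g)
    | mul f f' _ _ hf hf' =>
      intro g hg
      obtain ⟨g₁, hg₁, g₂, hg₂, rfl⟩ := Finset.mem_add.1 (support_coeff_mul_subset f f' hg)
      exact add_mem (hf g₁ hg₁) (hf' g₂ hg₂)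
  · rw [← sum_coeff_single f]
    exact sum_mem fun g hg => single_mem_monomialSubalgebra (hf g hg) _

theorem mem_span_monomialGen_iff {s : Set ι} {f : monomialSubalgebra K e} :
    f ∈ Ideal.span (monomialGen K e '' s) ↔ ∀ g ∈ (f : K[G]).coeff.support,
      ∃ i ∈ s, ∃ p ∈ AddSubmonoid.closure (Set.range e), g = e i + p := by
  classical
  refine ⟨fun hf => ?_, fun hf => ?_⟩
  · induction hf using Submodule.span_induction with
    | mem f hf =>
      obtain ⟨i, hi, rfl⟩ := hf
      intro g hg
      exact ⟨i, hi, 0, zero_mem _, by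
        rw [add_zero, Finset.mem_singleton.1 (Finsupp.support_single_subset hg)]⟩
    | zero => simp
    | add f f' _ _ hf hf' =>
      intro g hg
      exact (Finset.mem_union.1 (Finsupp.support_add hg)).elim (hf g) (hf' g)
    | smul r f _ hf =>
      intro g hg
      obtain ⟨g₁, hg₁, g₂, hg₂, rfl⟩ := Finset.mem_add.1 (support_coeff_mul_subset _ _ hg)
      obtain ⟨i, hi, p, hp, rfl⟩ := hf g₂ hg₂
      exact ⟨i, hi, g₁ + p, add_mem (mem_monomialSubalgebra_iff.1 r.2 g₁ hg₁) hp,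
        add_left_comm _ _ _⟩
  · have hsingle : ∀ g : (f : K[G]).coeff.support, ∃ y ∈ Ideal.span (monomialGen K e '' s),
        (y : K[G]) = single (g : G) ((f : K[G]).coeff g) := by
      rintro ⟨g, hg⟩
      obtain ⟨i, hi, p, hp, rfl⟩ := hf g hg
      exact ⟨⟨single p ((f : K[G]).coeff (e i + p)), single_mem_monomialSubalgebra hp _⟩ *
          monomialGen K e i,
        Ideal.mul_mem_left _ _ (Ideal.subset_span ⟨i, hi, rfl⟩),
        by simp [monomialGen, single_mul_single, add_comm]⟩
    choose y hy hy_coe using hsingle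
    convert sum_mem fun g _ => hy g
    apply Subtype.ext
    rw [AddSubmonoidClass.coe_finsetSum]
    simp only [hy_coe]
    rw [Finset.sum_coe_sort _ fun g => single g ((f : K[G]).coeff g)]
    exact (sum_coeff_single _).symm

end AddMonoidAlgebra

section AbsSum

variable {ι : Type*} [Fintype ι]

def absSum (a : ι →₀ ℤ) : ℤ := ∑ i, |a i|

theorem absSum_nonneg (a : ι →₀ ℤ) : 0 ≤ absSum a :=
  Finset.sum_nonneg fun i _ => abs_nonneg (a i)

@[simp]
theorem absSum_zero : absSum (0 : ι →₀ ℤ) = 0 := by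
  simp [absSum]

theorem eq_zero_of_absSum_nonpos {a : ι →₀ ℤ} (h : absSum a ≤ 0) : a = 0 := by
  ext i
  have := (Finset.sum_eq_zero_iff_of_nonneg fun i _ => abs_nonneg (a i)).1
    (h.antisymm (absSum_nonneg a)) i (Finset.mem_univ i)
  simpa using this

theorem absSum_add_le (a b : ι →₀ ℤ) : absSum (a + b) ≤ absSum a + absSum b := by
  rw [absSum, absSum, absSum, ← Finset.sum_add_distrib]
  exact Finset.sum_le_sum fun i _ => abs_add_le (a i) (b i)

theorem two_dvd_absSum_add_sub_absSum_add (a b : ι →₀ ℤ) :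
    2 ∣ absSum a + absSum b - absSum (a + b) := by
  rw [absSum, absSum, absSum, ← Finset.sum_add_distrib, ← Finset.sum_sub_distrib]
  refine Finset.dvd_sum fun i _ => ?_
  simp only [Finsupp.add_apply, Int.abs_eq_natAbs]
  omega

variable [DecidableEq ι]

theorem absSum_add_single (a : ι →₀ ℤ) (i : ι) (s : ℤ) :
    absSum (a + Finsupp.single i s) = absSum a - |a i| + |a i + s| := by
  rw [absSum, absSum, ← Finset.add_sum_erase _ _ (Finset.mem_univ i),
    ← Finset.add_sum_erase _ (fun j => |a j|) (Finset.mem_univ i),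
    Finset.sum_congr rfl fun j hj => by
      rw [Finsupp.add_apply, Finsupp.single_eq_of_ne (Finset.ne_of_mem_erase hj), add_zero]]
  simp only [Finsupp.add_apply, Finsupp.single_eq_same]
  ring

theorem absSum_sub_single (a : ι →₀ ℤ) (i : ι) (s : ℤ) :
    absSum (a - Finsupp.single i s) = absSum a - |a i| + |a i - s| := by
  rw [sub_eq_add_neg, ← Finsupp.single_neg, absSum_add_single, ← sub_eq_add_neg]

theorem absSum_single (i : ι) (s : ℤ) : absSum (Finsupp.single i s) = |s| := by
  simpa using absSum_add_single 0 i s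

theorem exists_absSum_sub_single_eq {a : ι →₀ ℤ} (ha : a ≠ 0) :
    ∃ i s, (s = 1 ∨ s = -1) ∧ absSum (a - Finsupp.single i s) = absSum a - 1 := by
  obtain ⟨i, hi⟩ := Finsupp.ne_iff.1 ha
  rw [Finsupp.coe_zero, Pi.zero_apply] at hi
  rcases hi.lt_or_gt with hneg | hpos
  · refine ⟨i, -1, .inr rfl, ?_⟩
    rw [absSum_sub_single, abs_of_neg hneg, abs_of_nonpos (by omega)]
    ring
  · refine ⟨i, 1, .inl rfl, ?_⟩
    rw [absSum_sub_single, abs_of_pos hpos, abs_of_nonneg (by omega)]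
    ring

end AbsSum

section Bn

open AddMonoidAlgebra

variable {n : ℕ}

abbrev monoidB (n : ℕ) : AddSubmonoid (LaurentExp n) :=
  AddSubmonoid.closure (Set.range (expB n))

theorem mem_range_expB_iff {x : LaurentExp n} :
    x ∈ Set.range (expB n) ↔ ∃ i s, (s = 1 ∨ s = -1) ∧ x = (1, Finsupp.single i s) := by
  constructor
  · rintro ⟨v, rfl⟩
    unfold expB
    split_ifs
    · exact ⟨_, 1, .inl rfl, rfl⟩
    · exact ⟨_, -1, .inr rfl, by rw [Finsupp.single_neg]⟩
  · rintro ⟨i, s, rfl | rfl, rfl⟩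
    · exact ⟨⟨i, by omega⟩, by simp [expB]⟩
    · exact ⟨⟨n + i, by omega⟩, by simp [expB, Finsupp.single_neg]⟩

theorem expB_injective : Function.Injective (expB n) := by
  intro v w h
  have hv := v.isLt
  have hw := w.isLt
  unfold expB at h
  split_ifs at h with hv' hw' hw'
  · simpa [Finsupp.single_eq_single_iff, Fin.ext_iff] using h
  · have := DFunLike.congr_fun (congrArg Prod.snd h) ⟨v, hv'⟩
    simp only [Finsupp.coe_neg, Pi.neg_apply, Finsupp.single_apply] at this
    split_ifs at this <;> omega
  · have := DFunLike.congr_fun (congrArg Prod.snd h) ⟨w, hw'⟩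
    simp only [Finsupp.coe_neg, Pi.neg_apply, Finsupp.single_apply] at this
    split_ifs at this; omega
  · simp [Finsupp.single_eq_single_iff, Fin.ext_iff] at h
    omega

def flipB (v : Fin (2 * n)) : Fin (2 * n) :=
  if h : (v : ℕ) < n then ⟨v + n, by omega⟩ else ⟨v - n, by omega⟩

theorem expB_flipB (v : Fin (2 * n)) : expB n (flipB v) = (1, -(expB n v).2) := by
  have := v.isLt
  unfold flipB
  split_ifs with h
  · rw [expB, dif_neg (by simp), expB, dif_pos h]
    simp
  · rw [expB, dif_pos (by simp; omega), expB, dif_neg h]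
    simp

theorem expB_flipB_add_expB (v : Fin (2 * n)) : expB n (flipB v) + expB n v = (2, 0) := by
  obtain ⟨i, s, -, hv⟩ := mem_range_expB_iff.1 (Set.mem_range_self v)
  rw [expB_flipB, hv]
  simp

theorem absSum_le_and_two_dvd_of_mem_monoidB {p : LaurentExp n} (hp : p ∈ monoidB n) :
    absSum p.2 ≤ p.1 ∧ 2 ∣ (p.1 : ℤ) - absSum p.2 := by
  induction hp using AddSubmonoid.closure_induction with
  | mem p hp =>
    obtain ⟨i, s, hs, rfl⟩ := mem_range_expB_iff.1 hp
    rw [absSum_single]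
    rcases hs with rfl | rfl <;> norm_num
  | zero => simp
  | add p q _ _ hp hq =>
    have hsub := absSum_add_le p.2 q.2
    have hdvd := two_dvd_absSum_add_sub_absSum_add p.2 q.2
    simp only [Prod.fst_add, Prod.snd_add, Nat.cast_add]
    omega

theorem mk_mem_monoidB (hn : n ≠ 0) (d : ℕ) (a : Fin n →₀ ℤ) (hle : absSum a ≤ d)
    (hdvd : 2 ∣ (d : ℤ) - absSum a) : (d, a) ∈ monoidB n := by
  induction d generalizing a with
  | zero =>
    obtain rfl := eq_zero_of_absSum_nonpos (a := a) (by exact_mod_cast hle)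
    exact zero_mem _
  | succ d ih =>
    push_cast at hle hdvd
    obtain ⟨i, s, hs, hstep⟩ : ∃ i s, (s = 1 ∨ s = -1) ∧
        absSum (a - Finsupp.single i s) ≤ d ∧ 2 ∣ (d : ℤ) - absSum (a - Finsupp.single i s) := by
      by_cases ha : a = 0
      · subst ha
        refine ⟨⟨0, Nat.pos_of_ne_zero hn⟩, 1, .inl rfl, ?_⟩
        rw [zero_sub, ← Finsupp.single_neg, absSum_single, abs_neg, abs_one]
        rw [absSum_zero] at hdvd
        omega
      · obtain ⟨i, s, hs, heq⟩ := exists_absSum_sub_single_eq ha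
        exact ⟨i, s, hs, by rw [heq]; omega⟩
    have hsplit : ((d + 1, a) : LaurentExp n) =
        (1, Finsupp.single i s) + (d, a - Finsupp.single i s) := by
      simp [add_comm]
    rw [hsplit]
    exact add_mem (AddSubmonoid.subset_closure (mem_range_expB_iff.2 ⟨i, s, hs, rfl⟩))
      (ih _ hstep.1 hstep.2)

theorem exists_eq_expB_add_of_absSum_lt {d : ℕ} {a : Fin n →₀ ℤ} (hm : (d, a) ∈ monoidB n)
    (v : Fin (2 * n)) (hlt : absSum (a - (expB n v).2) < d) :
    ∃ q ∈ monoidB n, ((d, a) : LaurentExp n) = expB n v + q := by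
  have hn : n ≠ 0 := by rintro rfl; exact v.elim0
  obtain ⟨i, s, hs, hv⟩ := mem_range_expB_iff.1 (Set.mem_range_self v)
  rw [hv] at hlt ⊢
  dsimp only at hlt
  obtain ⟨d, rfl⟩ : ∃ d', d = d' + 1 :=
    Nat.exists_eq_add_one.2 (by have := absSum_nonneg (a - Finsupp.single i s); omega)
  refine ⟨(d, a - Finsupp.single i s), mk_mem_monoidB hn _ _ (by push_cast at hlt; omega) ?_,
    by simp [add_comm]⟩
  have hdvd := (absSum_le_and_two_dvd_of_mem_monoidB hm).2
  rw [absSum_sub_single]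
  push_cast at hdvd
  simp only [Int.abs_eq_natAbs] at hdvd ⊢
  rcases hs with rfl | rfl <;> omega

theorem exists_eq_expB_add_or_expB_flipB_add {v w : Fin (2 * n)} (hvw : v ≠ w)
    {m p : LaurentExp n} (hm : m ∈ monoidB n) (hp : p ∈ monoidB n)
    (heq : m + expB n w = expB n v + p) :
    (∃ q ∈ monoidB n, m = expB n v + q) ∨ ∃ q ∈ monoidB n, m = expB n (flipB w) + q := by
  obtain ⟨i, s, hs, hv⟩ := mem_range_expB_iff.1 (Set.mem_range_self v)
  obtain ⟨k, t, ht, hw⟩ := mem_range_expB_iff.1 (Set.mem_range_self w)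
  obtain ⟨d, a⟩ := m
  have hp_eq : p = (d, a - Finsupp.single i s + Finsupp.single k t) := by
    rw [hv, hw] at heq
    have := congrArg (· - ((1, Finsupp.single i s) : LaurentExp n)) heq
    simp only [Prod.mk_add_mk, Prod.mk_sub_mk, add_tsub_cancel_right, add_tsub_cancel_left] at this
    rw [← this, sub_add_eq_add_sub]
  have hle := (absSum_le_and_two_dvd_of_mem_monoidB hp).1
  rw [hp_eq, absSum_add_single] at hle
  have ha : absSum a ≤ d := (absSum_le_and_two_dvd_of_mem_monoidB hm).1
  by_cases hdec : |a k + t| < |a k|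
  · refine .inr (exists_eq_expB_add_of_absSum_lt hm _ ?_)
    rw [expB_flipB, hw, sub_neg_eq_add, absSum_add_single]
    omega
  · refine .inl (exists_eq_expB_add_of_absSum_lt hm _ ?_)
    have hinc : |(a - Finsupp.single i s) k + t| = |(a - Finsupp.single i s) k| + 1 := by
      by_cases hik : i = k
      · subst hik
        have hst : s = -t := by
          have : s ≠ t := fun h => hvw (expB_injective (by rw [hv, hw, h]))
          rcases hs with rfl | rfl <;> rcases ht with rfl | rfl <;> simp_all
        simp only [hst, Finsupp.sub_apply, Finsupp.single_eq_same, sub_neg_eq_add] at hdec ⊢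
        simp only [Int.abs_eq_natAbs] at hdec ⊢
        rcases ht with rfl | rfl <;> omega
      · simp only [Finsupp.sub_apply, Finsupp.single_eq_of_ne' hik, sub_zero] at hdec ⊢
        simp only [Int.abs_eq_natAbs] at hdec ⊢
        rcases ht with rfl | rfl <;> omega
    rw [hv]
    simp only at hle ⊢
    omega

theorem ringBGen_flipB_mul_ringBGen_eq {K : Type} [Field K] (v w : Fin (2 * n)) :
    ringBGen K n (flipB v) * ringBGen K n v = ringBGen K n (flipB w) * ringBGen K n w := by
  apply Subtype.ext
  change single _ (1 : K) * single _ 1 = single _ 1 * single _ 1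
  rw [single_mul_single, single_mul_single, expB_flipB_add_expB, expB_flipB_add_expB]

theorem colon_span_ringBGen {K : Type} [Field K] {s : Set (Fin (2 * n))} {w : Fin (2 * n)}
    (hw : w ∉ s) :
    (Ideal.span (ringBGen K n '' s)).colon (Ideal.span {ringBGen K n w}) =
      Ideal.span (ringBGen K n '' (s ∪ {v | s.Nonempty ∧ v = flipB w})) := by
  refine le_antisymm (fun x hx => ?_) (Ideal.span_le.2 ?_)
  · rw [Ideal.mem_colon_span_singleton] at hx
    have hx' := (mem_span_monomialGen_iff (K := K) (e := expB n)).1 hx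
    refine (mem_span_monomialGen_iff (K := K) (e := expB n)).2 fun m hm => ?_
    have hmw : m + expB n w ∈
        ((x * ringBGen K n w : ringB K n) : LaurentRing K n).coeff.support := by
      change m + expB n w ∈ ((x : LaurentRing K n) * single _ 1).coeff.support
      rw [support_coeff_mul_single _ _ (by simp)]
      exact Finset.mem_map_of_mem _ hm
    obtain ⟨v, hv, p, hp, heq⟩ := hx' _ hmw
    rcases exists_eq_expB_add_or_expB_flipB_add (ne_of_mem_of_not_mem hv hw)
      (mem_monomialSubalgebra_iff.1 x.2 m hm) hp heq with ⟨q, hq, rfl⟩ | ⟨q, hq, rfl⟩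
    · exact ⟨v, .inl hv, q, hq, rfl⟩
    · exact ⟨flipB w, .inr ⟨⟨v, hv⟩, rfl⟩, q, hq, rfl⟩
  · rintro _ ⟨v, hv | ⟨⟨u, hu⟩, rfl⟩, rfl⟩ <;> rw [SetLike.mem_coe, Ideal.mem_colon_span_singleton]
    · exact Ideal.mul_mem_right _ _ (Ideal.subset_span ⟨v, hv, rfl⟩)
    · rw [ringBGen_flipB_mul_ringBGen_eq w u]
      exact Ideal.mul_mem_left _ _ (Ideal.subset_span ⟨u, hu, rfl⟩)

end Bn

theorem Bn_stronglyKoszul_general (K : Type) [Field K] (n : ℕ) :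
    StronglyKoszulWith (ringBGen K n) := by
  intro r c hc j
  have hcolon := colon_span_ringBGen (K := K) (s := c '' {k | k < j}) (w := c j)
    fun ⟨k, hk, hkj⟩ => (hc.injective hkj).not_lt hk
  rw [Set.image_image] at hcolon
  exact ⟨_, Set.image_subset_range _ _, hcolon⟩

/-- **Example 1.4.**  The toric ring
`K[B_n] = K[t_1 s, …, t_n s, t_1⁻¹ s, …, t_n⁻¹ s]` is strongly Koszul
(with respect to its distinguished degree-one system of generators). -/
theorem Bn_stronglyKoszul (K : Type) [Field K] (n : ℕ) (hn : 1 ≤ n) :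
    StronglyKoszulWith (ringBGen K n) :=
  Bn_stronglyKoszul_general K n
end
end

section
/- Let K be a field and let I_A ⊆ K[x_1,...,x_5] be the toric ideal of the fourth Veronese subring K[A] = K[t_1^4, t_1^3 t_2, t_1^2 t_2^2, t_1 t_2^3, t_2^4] of K[t_1,t_2] (where x_i ↦ t_1^{5−i} t_2^{i−1}). For every ordering x_{i_1} < x_{i_2} < x_{i_3} < x_{i_4} < x_{i_5} of the variables with {i_1, i_2} = {2, 4}, either x_2^3 or x_4^3 belongs to G(in_{<_rlex}(I_A)) ∩ (x_{i_2}), where <_rlex is the induced reverse lexicographic order. In particular, some monomial in G(in_{<_rlex}(I_A)) divisible by x_{i_2} is not quadratic, so I_A fails the hypothesis of the Gröbner-basis sufficient condition for strong Koszulness for the pair (2,4), even though K[A] is strongly Koszul. -/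
/-!
Common definitions: toric ideals/rings of monomial families, strong Koszulness
with respect to a system of algebra generators, initial ideals with respect to
a relation on exponent vectors, (reduced) Gröbner bases, the (graded) reverse
lexicographic order induced by an ordering of the variables, minimal monomial
generators, and compressedness.
-/

open MvPolynomial

open MvPolynomial

noncomputable section

/-- The exponent vectors of the monomials of the fourth Veronese subring of
`K[t_1, t_2]`: `u_i = t_1^{5-i} t_2^{i-1}` (0-indexed: `a i = t_1^{4-i} t_2^i`). -/
def veroExp (i : Fin 5) : Fin 2 →₀ ℕ :=
  Finsupp.single 0 (4 - (i : ℕ)) + Finsupp.single 1 (i : ℕ)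

/-!
For the `m`-th Veronese ring (`veroExp` is `veronese 4` by definition), with generators
`u_k = t_1^(m-k) t_2^k`, `K[A]` consists of the polynomials all of whose monomials have degree
divisible by `m`. In it `u_i` divides `x u_j` (`i < j`) exactly when `t_1^(j-i)` divides `x`, so
`(u_{i_1}, …, u_{i_{j-1}}) : u_{i_j}` is generated by the `u_k` with `k ≤ m - (i_j - i_{j-1})`.

If `f ∈ I_A` then `π f = 0`, so the initial monomial of `f` shares its fibre under `π` with another,
smaller, monomial of `f`; a monomial all of whose divisors are least in their fibres is therefore
not in `in(I_A)`. When `x_2, x_4` are the two smallest variables, the cube of the second smallest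
one is the initial term of `x_4^3 - x_2 x_5^2` or of `x_2^3 - x_1^2 x_4`, while its proper divisors
`x_i, x_i^2` are least in their fibres: `x_i` is alone in its fibre, and the only other member of
that of `x_i^2`, `x_{i-1} x_{i+1}`, involves neither `x_2` nor `x_4`. (`x_i` is the variable
`i - 1 : Fin 5`.)
-/

theorem Finsupp.linearCombination_apply_apply {ι κ : Type*} [Fintype ι] (a : ι → (κ →₀ ℕ))
    (e : ι →₀ ℕ) (c : κ) : Finsupp.linearCombination ℕ a e c = ∑ i, e i * a i c := by
  rw [Finsupp.linearCombination_apply, Finsupp.sum_apply,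
    Finsupp.sum_fintype _ _ fun i => by simp]
  simp only [Finsupp.smul_apply, smul_eq_mul]

theorem Finsupp.degree_fin_two (d : Fin 2 →₀ ℕ) : d.degree = d 0 + d 1 := by
  rw [Finsupp.degree_eq_sum, Fin.sum_univ_two]

theorem Finsupp.ext_fin_two {d e : Fin 2 →₀ ℕ} (h0 : d 0 = e 0) (h1 : d 1 = e 1) : d = e := by
  ext c; fin_cases c <;> assumption

theorem expDeg_eq_degree {n : ℕ} (d : Fin n →₀ ℕ) : expDeg d = d.degree := rfl

theorem eq_single_of_lt_single {ι : Type*} {s : ι →₀ ℕ} {i : ι} {N : ℕ}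
    (hs : s < Finsupp.single i N) : ∃ j < N, s = Finsupp.single i j := by
  obtain ⟨j, rfl⟩ := Finsupp.support_subset_singleton'.mp
    ((Finsupp.support_mono hs.le).trans Finsupp.support_single_subset)
  exact ⟨j, lt_of_le_of_ne (Finsupp.single_le_single.mp hs.le) fun h => hs.ne (h ▸ rfl), rfl⟩

section Toric

variable {K : Type} [Field K] {n d : ℕ} {a : Fin n → (Fin d →₀ ℕ)}

theorem aeval_monomial_toric (e : Fin n →₀ ℕ) (c : K) :
    aeval (fun i => (monomial (a i) (1 : K) : MvPolynomial (Fin d) K)) (monomial e c)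
      = monomial (Finsupp.linearCombination ℕ a e) c := by
  simp only [aeval_monomial, monomial_pow, one_pow, Finsupp.linearCombination_apply,
    monomial_finsupp_sum_index, algebraMap_eq]

theorem monomial_sub_monomial_mem_toricIdeal {e e' : Fin n →₀ ℕ}
    (h : Finsupp.linearCombination ℕ a e = Finsupp.linearCombination ℕ a e') :
    monomial e (1 : K) - monomial e' 1 ∈ toricIdeal K a := by
  simp only [toricIdeal, RingHom.mem_ker, AlgHom.toRingHom_eq_coe, RingHom.coe_coe, map_sub,
    aeval_monomial_toric, h, sub_self]

/-- The coefficient of `t^w` in `π f` is the sum of the coefficients of `f` over the fibre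
of `w`, so it cannot consist of `s` alone. -/
theorem exists_ne_linearCombination_eq_of_mem_toricIdeal {f : MvPolynomial (Fin n) K}
    (hf : f ∈ toricIdeal K a) {s : Fin n →₀ ℕ} (hs : s ∈ f.support) :
    ∃ e ∈ f.support, e ≠ s ∧
      Finsupp.linearCombination ℕ a e = Finsupp.linearCombination ℕ a s := by
  classical
  by_contra! hfib
  have hcoeff := congrArg (coeff (Finsupp.linearCombination ℕ a s)) (RingHom.mem_ker.mp hf)
  rw [AlgHom.toRingHom_eq_coe, RingHom.coe_coe, f.as_sum, map_sum, coeff_sum, coeff_zero,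
    Finset.sum_eq_single_of_mem s hs] at hcoeff
  · rw [aeval_monomial_toric, coeff_monomial, if_pos rfl] at hcoeff
    exact mem_support_iff.mp hs hcoeff
  · intro e he hes
    rw [aeval_monomial_toric, coeff_monomial, if_neg (hfib e he hes)]

theorem toricGen_ne_zero (i : Fin n) : toricGen K a i ≠ 0 :=
  fun h => one_ne_zero ((monomial_eq_zero (s := a i)).mp (congrArg Subtype.val h))

end Toric

section InitialIdeal

variable {K : Type} [Field K] {n : ℕ} {lt : (Fin n →₀ ℕ) → (Fin n →₀ ℕ) → Prop}

theorem monomial_mem_initialIdeal_iff {I : Ideal (MvPolynomial (Fin n) K)} {dd : Fin n →₀ ℕ} :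
    monomial dd (1 : K) ∈ initialIdeal lt I ↔ ∃ s, (∃ f ∈ I, IsInitialExp lt f s) ∧ s ≤ dd := by
  classical
  have himage : {m | ∃ f ∈ I, ∃ s, IsInitialExp lt f s ∧ m = monomial s (1 : K)}
      = (fun s => monomial s (1 : K)) '' {s | ∃ f ∈ I, IsInitialExp lt f s} := by
    ext
    aesop
  rw [initialIdeal, himage, mem_ideal_span_monomial_image, support_monomial, if_neg one_ne_zero]
  simp only [Finset.mem_singleton, forall_eq, Set.mem_ofPred_eq]

theorem isInitialExp_monomial_sub_monomial {b dd : Fin n →₀ ℕ} (hbd : b ≠ dd) (hlt : lt b dd) :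
    IsInitialExp lt (monomial dd (1 : K) - monomial b 1) dd := by
  classical
  refine ⟨?_, fun e he hed => ?_⟩
  · rw [mem_support_iff, coeff_sub, coeff_monomial, coeff_monomial, if_pos rfl, if_neg hbd]
    simp
  · rcases Finset.mem_union.mp (support_sub (Fin n) _ _ he) with he' | he'
    · exact absurd (Finset.mem_singleton.mp (support_monomial_subset he')) hed
    · rwa [Finset.mem_singleton.mp (support_monomial_subset he')]

end InitialIdeal

section ToricInitialIdeal

variable {K : Type} [Field K] {n d : ℕ} {a : Fin n → (Fin d →₀ ℕ)}
  {lt : (Fin n →₀ ℕ) → (Fin n →₀ ℕ) → Prop}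

theorem not_isInitialExp_of_mem_toricIdeal {s : Fin n →₀ ℕ}
    (hmin : ∀ e, Finsupp.linearCombination ℕ a e = Finsupp.linearCombination ℕ a s →
      e ≠ s → ¬ lt e s)
    {f : MvPolynomial (Fin n) K} (hf : f ∈ toricIdeal K a) : ¬ IsInitialExp lt f s := by
  rintro ⟨hs, hinit⟩
  obtain ⟨e, he, hes, hfib⟩ := exists_ne_linearCombination_eq_of_mem_toricIdeal hf hs
  exact hmin e hfib hes (hinit e he hes)

theorem isMinGen_initialIdeal_toricIdeal {b dd : Fin n →₀ ℕ}
    (hfib : Finsupp.linearCombination ℕ a b = Finsupp.linearCombination ℕ a dd)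
    (hbd : b ≠ dd) (hlt : lt b dd)
    (hmin : ∀ s < dd, ∀ e, Finsupp.linearCombination ℕ a e = Finsupp.linearCombination ℕ a s →
      e ≠ s → ¬ lt e s) :
    IsMinGen (initialIdeal lt (toricIdeal K a)) dd := by
  refine ⟨monomial_mem_initialIdeal_iff.mpr ⟨dd, ⟨_, monomial_sub_monomial_mem_toricIdeal hfib.symm,
    isInitialExp_monomial_sub_monomial hbd hlt⟩, le_rfl⟩, fun d' hd' hd'ne hmem => ?_⟩
  obtain ⟨s, ⟨f, hf, hs⟩, hsd'⟩ := monomial_mem_initialIdeal_iff.mp hmem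
  exact not_isInitialExp_of_mem_toricIdeal
    (hmin s (lt_of_le_of_lt hsd' (lt_of_le_of_ne hd' hd'ne))) hf hs

end ToricInitialIdeal

theorem not_rlexLT_of_le_of_lt {n : ℕ} (ord : Fin n ≃ Fin n) {e s : Fin n →₀ ℕ} (k : Fin n)
    (hdeg : expDeg s ≤ expDeg e) (hle : ∀ p ≤ k, e (ord p) ≤ s (ord p))
    (hlt : ∃ p ≤ k, e (ord p) < s (ord p)) : ¬ rlexLT ord e s := by
  rintro (hdeg' | ⟨-, p, hp, heq⟩)
  · omega
  obtain ⟨q, hqk, hq⟩ := hlt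
  by_cases hpk : p ≤ k
  · exact absurd (hle p hpk) (not_le.mpr hp)
  · exact absurd (heq q (lt_of_le_of_lt hqk (not_le.mp hpk))) hq.ne

def veronese (m : ℕ) (i : Fin (m + 1)) : Fin 2 →₀ ℕ :=
  Finsupp.single 0 (m - (i : ℕ)) + Finsupp.single 1 (i : ℕ)

section Veronese

variable {K : Type} [Field K] {m : ℕ}

@[simp] theorem veronese_apply_zero (i : Fin (m + 1)) : veronese m i 0 = m - i := by
  simp [veronese]

@[simp] theorem veronese_apply_one (i : Fin (m + 1)) : veronese m i 1 = i := by
  simp [veronese]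

theorem degree_veronese (i : Fin (m + 1)) : (veronese m i).degree = m := by
  have := i.isLt
  rw [Finsupp.degree_fin_two, veronese_apply_zero, veronese_apply_one]
  omega

theorem exists_veronese_add {d : Fin 2 →₀ ℕ} (hdvd : m ∣ d.degree) (hd : d.degree ≠ 0)
    {r : ℕ} (hr : r ≤ d 0) (hrm : r ≤ m) :
    ∃ k : Fin (m + 1), (k : ℕ) ≤ m - r ∧ ∃ d', m ∣ d'.degree ∧ d = veronese m k + d' := by
  have hm : m ≤ d.degree := Nat.le_of_dvd (Nat.pos_of_ne_zero hd) hdvd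
  rw [Finsupp.degree_fin_two] at hm
  let k : Fin (m + 1) := ⟨m - min (d 0) m, by omega⟩
  have hle : veronese m k ≤ d := fun c => by
    fin_cases c <;> simp [k] <;> omega
  refine ⟨k, by simp [k]; omega, d - veronese m k, ?_, (add_tsub_cancel_of_le hle).symm⟩
  have hsplit := congrArg Finsupp.degree (add_tsub_cancel_of_le hle)
  rw [map_add, degree_veronese] at hsplit
  simpa [← hsplit] using hdvd

theorem monomial_mem_toricRing_veronese {d : Fin 2 →₀ ℕ} (c : K) (hdvd : m ∣ d.degree) :
    monomial d c ∈ toricRing K (veronese m) := by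
  induction hdeg : d.degree using Nat.strong_induction_on generalizing d with
  | _ N ih =>
  by_cases hd : d.degree = 0
  · rw [(Finsupp.degree_eq_zero_iff d).mp hd, monomial_zero']
    exact Subalgebra.algebraMap_mem _ c
  obtain ⟨k, -, d', hd'dvd, rfl⟩ := exists_veronese_add hdvd hd (Nat.zero_le _) (Nat.zero_le m)
  have hm : m ≠ 0 := fun h => hd (Nat.eq_zero_of_zero_dvd (h ▸ hdvd))
  rw [← one_mul c, ← monomial_mul]
  refine mul_mem (Algebra.subset_adjoin ⟨k, rfl⟩) (ih d'.degree ?_ hd'dvd rfl)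
  rw [← hdeg, map_add, degree_veronese]
  omega

theorem mem_toricRing_veronese_iff {p : MvPolynomial (Fin 2) K} :
    p ∈ toricRing K (veronese m) ↔ ∀ d ∈ p.support, m ∣ d.degree := by
  classical
  refine ⟨fun hp => ?_, fun h => p.as_sum ▸ sum_mem fun d hd => ?_⟩
  · induction hp using Algebra.adjoin_induction with
    | mem x hx =>
      obtain ⟨i, rfl⟩ := hx
      intro d hd
      rw [Finset.mem_singleton.mp (support_monomial_subset hd), degree_veronese]
    | algebraMap c =>
      intro d hd
      rw [algebraMap_eq, C_apply] at hd
      rw [Finset.mem_singleton.mp (support_monomial_subset hd), map_zero]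
      exact dvd_zero m
    | add x y _ _ hx hy =>
      intro d hd
      rcases Finset.mem_union.mp (support_add hd) with h | h
      exacts [hx d h, hy d h]
    | mul x y _ _ hx hy =>
      intro d hd
      obtain ⟨e, he, e', he', rfl⟩ := Finset.mem_add.mp (support_mul x y hd)
      rw [map_add]
      exact dvd_add (hx e he) (hy e' he')
  · exact monomial_mem_toricRing_veronese _ (h d hd)

theorem mem_span_toricGen_veronese {r : ℕ} (hr : 0 < r) (hrm : r ≤ m)
    {x : toricRing K (veronese m)} (hx : ∀ d ∈ (x : MvPolynomial (Fin 2) K).support, r ≤ d 0) :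
    x ∈ Ideal.span (toricGen K (veronese m) '' {k | (k : ℕ) ≤ m - r}) := by
  classical
  suffices (x : MvPolynomial (Fin 2) K) ∈ Submodule.map (toricRing K (veronese m)).val.toLinearMap
      ((Ideal.span (toricGen K (veronese m) '' {k | (k : ℕ) ≤ m - r})).restrictScalars K) by
    obtain ⟨y, hy, hyx⟩ := this
    rwa [← Subtype.ext hyx]
  rw [(x : MvPolynomial (Fin 2) K).as_sum]
  refine sum_mem fun d hd => ?_
  have hd0 := hx d hd
  obtain ⟨k, hk, d', hd'dvd, rfl⟩ := exists_veronese_add (mem_toricRing_veronese_iff.mp x.2 d hd)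
    (by rw [Finsupp.degree_fin_two]; omega) hd0 hrm
  set c := coeff (veronese m k + d') (x : MvPolynomial (Fin 2) K)
  refine ⟨⟨monomial d' c, monomial_mem_toricRing_veronese c hd'dvd⟩ * toricGen K (veronese m) k,
    Ideal.mul_mem_left _ _ (Ideal.subset_span ⟨k, hk, rfl⟩), ?_⟩
  change (monomial d' c * monomial (veronese m k) (1 : K) : MvPolynomial (Fin 2) K) = _
  rw [monomial_mul, mul_one, add_comm]

theorem toricGen_veronese_mul_toricGen {i j k l : Fin (m + 1)} (h : (k : ℕ) + j = i + l) :
    toricGen K (veronese m) k * toricGen K (veronese m) j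
      = toricGen K (veronese m) i * toricGen K (veronese m) l := by
  have := i.isLt; have := j.isLt; have := k.isLt; have := l.isLt
  apply Subtype.ext
  change monomial (veronese m k) 1 * monomial (veronese m j) 1
    = monomial (veronese m i) (1 : K) * monomial (veronese m l) 1
  rw [monomial_mul, monomial_mul, Finsupp.ext_fin_two (d := veronese m k + veronese m j)
    (e := veronese m i + veronese m l) (by simp; omega) (by simp; omega)]

theorem colon_span_toricGen_veronese {i j : Fin (m + 1)} (hij : i < j) {T : Set (Fin (m + 1))}
    (hiT : i ∈ T) (hT : ∀ k ∈ T, k ≤ i) :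
    Submodule.colon (Ideal.span (toricGen K (veronese m) '' T))
        (Ideal.span {toricGen K (veronese m) j})
      = Ideal.span (toricGen K (veronese m) '' {k | (k : ℕ) ≤ m - (j - i)}) := by
  have hij' : (i : ℕ) < j := hij
  have := j.isLt
  apply le_antisymm
  · intro x hx
    have hval := Ideal.mem_map_of_mem (toricRing K (veronese m)).val
      (Ideal.mem_colon_span_singleton.mp hx)
    rw [Ideal.map_span, Set.image_image, map_mul,
      show (fun k => (toricRing K (veronese m)).val (toricGen K (veronese m) k)) '' T
        = (fun s => monomial s (1 : K)) '' (veronese m '' T) by rw [Set.image_image]; rfl]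
      at hval
    refine mem_span_toricGen_veronese (by omega) (by omega) fun d hd => ?_
    have hds : d + veronese m j ∈ ((x : MvPolynomial (Fin 2) K) *
        (toricRing K (veronese m)).val (toricGen K (veronese m) j)).support := by
      change _ ∈ (_ * monomial (veronese m j) 1).support
      rwa [mem_support_iff, coeff_mul_monomial, mul_one, ← mem_support_iff]
    obtain ⟨_, ⟨k, hkT, rfl⟩, hle⟩ := mem_ideal_span_monomial_image.mp hval _ hds
    have hk0 := hle 0
    have hki : (k : ℕ) ≤ i := hT k hkT
    simp only [veronese_apply_zero, Finsupp.coe_add, Pi.add_apply] at hk0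
    omega
  · rw [Ideal.span_le]
    rintro _ ⟨k, hk, rfl⟩
    have hk' : (k : ℕ) ≤ m - (j - i) := hk
    have hmul := toricGen_veronese_mul_toricGen (K := K) (i := i) (j := j) (k := k)
      (l := ⟨k + (j - i), by omega⟩) (by simp only; omega)
    rw [SetLike.mem_coe, Ideal.mem_colon_span_singleton, hmul]
    exact Ideal.mul_mem_right _ _ (Ideal.subset_span ⟨i, hiT, rfl⟩)

theorem toricStronglyKoszul_veronese : ToricStronglyKoszul K (veronese m) := by
  intro r c hc j
  rcases Nat.eq_zero_or_pos (j : ℕ) with hj | hj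
  · refine ⟨∅, Set.empty_subset _, ?_⟩
    have hnone : {k : Fin r | k < j} = ∅ :=
      Set.eq_empty_of_forall_notMem fun k (hk : k < j) => by omega
    rw [hnone, Set.image_empty, Ideal.span_empty, eq_bot_iff]
    intro x hx
    rw [Ideal.mem_colon_span_singleton, Ideal.mem_bot] at hx
    exact (mul_eq_zero.mp hx).resolve_right (toricGen_ne_zero _)
  · let jp : Fin r := ⟨j - 1, by omega⟩
    have hjp : jp < j := Fin.lt_def.mpr (by simp only [jp]; omega)
    refine ⟨toricGen K (veronese m) '' {k | (k : ℕ) ≤ m - (c j - c jp)},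
      Set.image_subset_range _ _, ?_⟩
    rw [← Set.image_image]
    refine colon_span_toricGen_veronese (hc hjp) ⟨jp, hjp, rfl⟩ ?_
    rintro _ ⟨k, hk : k < j, rfl⟩
    refine hc.monotone (Fin.le_def.mpr ?_)
    simp only [jp]
    omega

end Veronese

theorem veroExp_fiber_single {i : Fin 5} (hi : i = 1 ∨ i = 3) {j : ℕ} (hj : j < 3)
    {e : Fin 5 →₀ ℕ} (hfib : Finsupp.linearCombination ℕ veroExp e
      = Finsupp.linearCombination ℕ veroExp (Finsupp.single i j))
    (hne : e ≠ Finsupp.single i j) :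
    expDeg (Finsupp.single i j) ≤ expDeg e ∧ e 1 ≤ Finsupp.single i j 1 ∧
      e 3 ≤ Finsupp.single i j 3 ∧ e 1 + e 3 < Finsupp.single i j 1 + Finsupp.single i j 3 := by
  have h0 := DFunLike.congr_fun hfib 0
  have h1 := DFunLike.congr_fun hfib 1
  simp only [Finsupp.linearCombination_apply_apply, Fin.sum_univ_five] at h0 h1
  simp only [expDeg_eq_degree, Finsupp.degree_eq_sum, Fin.sum_univ_five]
  rcases hi with rfl | rfl <;> simp [veroExp] at h0 h1 ⊢ <;>
    refine ⟨by omega, by omega, by omega, ?_⟩ <;> by_contra hlt <;>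
    exact hne (Finsupp.ext fun c => by fin_cases c <;> simp <;> omega)

theorem exists_le_one_ord_eq_iff {ord : Fin 5 ≃ Fin 5}
    (hord : (ord 0 = 1 ∧ ord 1 = 3) ∨ (ord 0 = 3 ∧ ord 1 = 1)) (c : Fin 5) :
    (∃ p ≤ 1, ord p = c) ↔ c = 1 ∨ c = 3 := by
  constructor
  · rintro ⟨p, hp, rfl⟩
    obtain rfl | rfl : p = 0 ∨ p = 1 := by omega
    all_goals tauto
  · rcases hord with ⟨h0, h1⟩ | ⟨h0, h1⟩ <;> rintro (rfl | rfl)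
    exacts [⟨0, by decide, h0⟩, ⟨1, le_rfl, h1⟩, ⟨1, le_rfl, h1⟩, ⟨0, by decide, h0⟩]

theorem isMinGen_veroExp_single_three {K : Type} [Field K] (ord : Fin 5 ≃ Fin 5)
    (hord : (ord 0 = 1 ∧ ord 1 = 3) ∨ (ord 0 = 3 ∧ ord 1 = 1)) :
    IsMinGen (initialIdeal (rlexLT ord) (toricIdeal K veroExp)) (Finsupp.single (ord 1) 3) := by
  obtain ⟨b, hfib, hb0, hdeg⟩ : ∃ b, Finsupp.linearCombination ℕ veroExp b
      = Finsupp.linearCombination ℕ veroExp (Finsupp.single (ord 1) 3) ∧ b (ord 0) = 1 ∧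
      expDeg b = expDeg (Finsupp.single (ord 1) 3) := by
    simp only [Finsupp.ext_iff, Fin.forall_fin_two, Finsupp.linearCombination_apply_apply,
      Fin.sum_univ_five, expDeg_eq_degree, Finsupp.degree_eq_sum]
    rcases hord with ⟨h0, h1⟩ | ⟨h0, h1⟩ <;> rw [h0, h1]
    · exact ⟨Finsupp.single 1 1 + Finsupp.single 4 2, by simp [veroExp]⟩
    · exact ⟨Finsupp.single 0 2 + Finsupp.single 3 1, by simp [veroExp]⟩
  have hsingle0 : Finsupp.single (ord 1) 3 (ord 0) = 0 :=
    Finsupp.single_eq_of_ne (ord.injective.ne (by decide))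
  refine isMinGen_initialIdeal_toricIdeal hfib
    (fun h => by simp [h, hsingle0] at hb0)
    (Or.inr ⟨hdeg, 0, by omega, fun q hq => absurd hq (Fin.not_lt_zero q)⟩) ?_
  intro s hs e he hne
  have hsmall := exists_le_one_ord_eq_iff hord
  obtain ⟨j, hj, rfl⟩ := eq_single_of_lt_single hs
  obtain ⟨hdeg', h1, h3, hlt⟩ :=
    veroExp_fiber_single ((hsmall (ord 1)).mp ⟨1, le_rfl, rfl⟩) hj he hne
  refine not_rlexLT_of_le_of_lt ord 1 hdeg' (fun p hp => ?_) ?_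
  · rcases (hsmall (ord p)).mp ⟨p, hp, rfl⟩ with h | h <;> rw [h] <;> assumption
  · obtain ⟨c, hc, hec⟩ : ∃ c, (c = 1 ∨ c = 3) ∧ e c < Finsupp.single (ord 1) j c := by
      rcases Nat.lt_or_ge (e 1) (Finsupp.single (ord 1) j 1) with h | h
      exacts [⟨1, Or.inl rfl, h⟩, ⟨3, Or.inr rfl, by omega⟩]
    obtain ⟨p, hp, rfl⟩ := (hsmall c).mpr hc
    exact ⟨p, hp, hec⟩

/-- **Example 1.6.**  For the fourth Veronese subring
`K[A] = K[t_1^4, t_1^3 t_2, t_1^2 t_2^2, t_1 t_2^3, t_2^4]` of `K[t_1, t_2]`: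
for every ordering of the variables whose two smallest variables are `x_2` and
`x_4` (indices `1` and `3` below; `ord p` is the `p`-th smallest variable),
either `x_2³` or `x_4³` lies in `G(in_rlex(I_A)) ∩ (x_{i_2})`; in particular
some monomial of `G(in_rlex(I_A))` divisible by the second-smallest variable
`x_{i_2}` is not quadratic — even though `K[A]` is strongly Koszul. -/
theorem veronese_fails_rlex_condition_but_stronglyKoszul (K : Type) [Field K] :
    (∀ ord : Fin 5 ≃ Fin 5,
      ((ord 0 = 1 ∧ ord 1 = 3) ∨ (ord 0 = 3 ∧ ord 1 = 1)) →
      ((IsMinGen (initialIdeal (rlexLT ord) (toricIdeal K veroExp))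
          (Finsupp.single 1 3) ∧ (Finsupp.single (1 : Fin 5) 3) (ord 1) ≠ 0) ∨
       (IsMinGen (initialIdeal (rlexLT ord) (toricIdeal K veroExp))
          (Finsupp.single 3 3) ∧ (Finsupp.single (3 : Fin 5) 3) (ord 1) ≠ 0))) ∧
    (∀ ord : Fin 5 ≃ Fin 5,
      ((ord 0 = 1 ∧ ord 1 = 3) ∨ (ord 0 = 3 ∧ ord 1 = 1)) →
      ∃ dd : Fin 5 →₀ ℕ,
        IsMinGen (initialIdeal (rlexLT ord) (toricIdeal K veroExp)) dd ∧
        dd (ord 1) ≠ 0 ∧ expDeg dd ≠ 2) ∧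
    ToricStronglyKoszul K veroExp := by
  refine ⟨fun ord hord => ?_, fun ord hord => ?_, toricStronglyKoszul_veronese⟩
  · have hmin := isMinGen_veroExp_single_three (K := K) ord hord
    rcases hord with ⟨-, h1⟩ | ⟨-, h1⟩ <;> rw [h1] at hmin ⊢
    · exact Or.inr ⟨hmin, by simp⟩
    · exact Or.inl ⟨hmin, by simp⟩
  · refine ⟨_, isMinGen_veroExp_single_three ord hord, by simp, ?_⟩
    simp [expDeg_eq_degree]

end
end

section
/- Let K be a field and let A = {t_4, t_1 t_4, t_2 t_4, t_3 t_4, t_1 t_2 t_4, t_2 t_3 t_4, t_1 t_3 t_4, t_1 t_2 t_3 t_4} ⊆ K[t_1, t_2, t_3, t_4], with toric ideal I_A ⊆ K[x_1,...,x_8] (with x_1 ↦ t_4, x_2 ↦ t_1 t_4, x_3 ↦ t_2 t_4, x_4 ↦ t_3 t_4, x_5 ↦ t_1 t_2 t_4, x_6 ↦ t_2 t_3 t_4, x_7 ↦ t_1 t_3 t_4, x_8 ↦ t_1 t_2 t_3 t_4). Then I_A is generated by the nine binomials x_1 x_5 − x_2 x_3, x_1 x_6 − x_3 x_4, x_1 x_7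 − x_2 x_4, x_5 x_6 − x_3 x_8, x_6 x_7 − x_4 x_8, x_5 x_7 − x_2 x_8, x_1 x_8 − x_4 x_5, x_2 x_6 − x_4 x_5, and x_3 x_7 − x_4 x_5. -/
/-!
Common definitions: toric ideals/rings of monomial families, strong Koszulness
with respect to a system of algebra generators, initial ideals with respect to
a relation on exponent vectors, (reduced) Gröbner bases, the (graded) reverse
lexicographic order induced by an ordering of the variables, minimal monomial
generators, and compressedness.
-/

open MvPolynomial

open MvPolynomial

noncomputable section

/-- The exponent vectors of the eight monomials
`A = {t_4, t_1 t_4, t_2 t_4, t_3 t_4, t_1 t_2 t_4, t_2 t_3 t_4, t_1 t_3 t_4,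
t_1 t_2 t_3 t_4}` in `K[t_1, t_2, t_3, t_4]` (0-indexed variables `t`). -/
def stExp : Fin 8 → (Fin 4 →₀ ℕ)
  | 0 => Finsupp.single 3 1
  | 1 => Finsupp.single 0 1 + Finsupp.single 3 1
  | 2 => Finsupp.single 1 1 + Finsupp.single 3 1
  | 3 => Finsupp.single 2 1 + Finsupp.single 3 1
  | 4 => Finsupp.single 0 1 + Finsupp.single 1 1 + Finsupp.single 3 1
  | 5 => Finsupp.single 1 1 + Finsupp.single 2 1 + Finsupp.single 3 1
  | 6 => Finsupp.single 0 1 + Finsupp.single 2 1 + Finsupp.single 3 1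
  | 7 => Finsupp.single 0 1 + Finsupp.single 1 1 + Finsupp.single 2 1 + Finsupp.single 3 1

/-!
The eight monomials are `t_4 t^S` for the subsets `S ⊆ {1,2,3}`, so `K[A]` is the Hibi ring of the
Boolean lattice and the nine binomials span the Hibi relations `x_S x_T - x_{S ∩ T} x_{S ∪ T}` for
incomparable `S`, `T`. Modulo these relations every monomial reduces to one whose support is a
chain, and a chain monomial is recovered from its image `t^v`. So an element of the toric ideal is
congruent to one with chain support, whose image has the same coefficients and hence vanishes.
-/

section Toric

variable {K : Type} [Field K] {n d : ℕ} (a : Fin n → Fin d →₀ ℕ)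

theorem aeval_monomial_eq_monomial_linearCombination (e : Fin n →₀ ℕ) (c : K) :
    aeval (fun i => (monomial (a i) 1 : MvPolynomial (Fin d) K)) (monomial e c) =
      monomial (Finsupp.linearCombination ℕ a e) c := by
  simp only [aeval_monomial, monomial_pow, one_pow, Finsupp.linearCombination_apply,
    monomial_finsupp_sum_index, algebraMap_eq]

theorem binomial_mem_toricIdeal {i j k l : Fin n} (h : a i + a j = a k + a l) :
    (X i * X j - X k * X l : MvPolynomial (Fin n) K) ∈ toricIdeal K a := by
  simp [toricIdeal, RingHom.mem_ker, monomial_mul, h]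

theorem eq_zero_of_mem_toricIdeal_of_injOn {g : MvPolynomial (Fin n) K}
    (hg : g ∈ toricIdeal K a)
    (hinj : Set.InjOn (Finsupp.linearCombination ℕ a) g.support) : g = 0 := by
  ext e
  by_cases he : e ∈ g.support
  · have hcoeff : coeff (Finsupp.linearCombination ℕ a e)
        (aeval (fun i => (monomial (a i) 1 : MvPolynomial (Fin d) K)) g) = coeff e g := by
      conv_lhs => rw [g.as_sum]
      simp only [map_sum, aeval_monomial_eq_monomial_linearCombination, coeff_sum, coeff_monomial]
      rw [Finset.sum_eq_single_of_mem e he fun e' he' hne => if_neg fun h => hne (hinj he' he h),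
        if_pos rfl]
    have hπ : aeval (fun i => (monomial (a i) 1 : MvPolynomial (Fin d) K)) g = 0 := hg
    rw [← hcoeff, hπ, coeff_zero, coeff_zero]
  · rwa [coeff_zero, ← notMem_support_iff]

theorem toricIdeal_eq_of_normalForm (J : Ideal (MvPolynomial (Fin n) K))
    (hJ : J ≤ toricIdeal K a) (N : Set (Fin n →₀ ℕ))
    (hN : ∀ e, ∃ e' ∈ N, monomial e 1 - monomial e' 1 ∈ J)
    (hinj : Set.InjOn (Finsupp.linearCombination ℕ a) N) : toricIdeal K a = J := by
  refine le_antisymm (fun f hf => ?_) hJ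
  choose nf hnfN hnfJ using hN
  set g := ∑ e ∈ f.support, monomial (nf e) (coeff e f)
  have hfg : f - g ∈ J := by
    have : f - g = ∑ e ∈ f.support, C (coeff e f) * (monomial e 1 - monomial (nf e) 1) := by
      simp only [g, mul_sub, C_mul_monomial, mul_one, Finset.sum_sub_distrib,
        ← f.as_sum]
    rw [this]
    exact J.sum_mem fun e _ => J.mul_mem_left _ (hnfJ e)
  have hgN : (g.support : Set (Fin n →₀ ℕ)) ⊆ N := fun e he => by
    obtain ⟨e', -, he'⟩ := Finset.mem_biUnion.1 (support_sum he)
    rw [Finset.mem_singleton.1 (support_monomial_subset he')]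
    exact hnfN e'
  have hg : g = 0 := eq_zero_of_mem_toricIdeal_of_injOn a
    (by simpa using (toricIdeal K a).sub_mem hf (hJ hfg)) (hinj.mono hgN)
  simpa [hg] using hfg

end Toric

section Rewriting

variable {R σ : Type*} [CommRing R] (J : Ideal (MvPolynomial σ R))

theorem exists_sub_mem_of_rewrite (Bad : σ → σ → Prop) (hirr : ∀ i, ¬ Bad i i) (w : σ → ℕ)
    (hrw : ∀ i j, Bad i j → ∃ k l, (X i * X j - X k * X l : MvPolynomial σ R) ∈ J ∧
      w k + w l < w i + w j) (d : σ →₀ ℕ) :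
    ∃ e : σ →₀ ℕ, (∀ i j, Bad i j → e i = 0 ∨ e j = 0) ∧ monomial d 1 - monomial e 1 ∈ J := by
  induction hμ : Finsupp.linearCombination ℕ w d using Nat.strong_induction_on generalizing d
    with | _ N ih
  by_cases hstd : ∀ i j, Bad i j → d i = 0 ∨ d j = 0
  · exact ⟨d, hstd, by simp⟩
  push Not at hstd
  obtain ⟨i, j, hij, hi, hj⟩ := hstd
  have hne : i ≠ j := by rintro rfl; exact hirr i hij
  obtain ⟨k, l, hJ, hw⟩ := hrw i j hij
  have hi' : Finsupp.single i 1 ≤ d := Finsupp.single_le_iff.2 (Nat.one_le_iff_ne_zero.2 hi)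
  have hj' : Finsupp.single j 1 ≤ d - Finsupp.single i 1 := Finsupp.single_le_iff.2 (by
    simpa [Finsupp.single_apply, hne] using Nat.one_le_iff_ne_zero.2 hj)
  set b := d - Finsupp.single i 1 - Finsupp.single j 1
  have hd : d = b + Finsupp.single j 1 + Finsupp.single i 1 := by
    rw [tsub_add_cancel_of_le hj', tsub_add_cancel_of_le hi']
  set d' := b + Finsupp.single k 1 + Finsupp.single l 1
  have hstep : monomial d (1 : R) - monomial d' 1 = monomial b 1 * (X i * X j - X k * X l) := by
    simp only [hd, d', X, mul_sub, monomial_mul, mul_one, add_assoc, add_comm, add_left_comm]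
  obtain ⟨e, he, hd'e⟩ := ih _ (by
    subst hμ
    simp only [hd, d', map_add, Finsupp.linearCombination_single, smul_eq_mul, one_mul]
    omega) d' rfl
  refine ⟨e, he, ?_⟩
  rw [← sub_add_sub_cancel _ (monomial d' 1), hstep]
  exact J.add_mem (J.mul_mem_left _ hJ) hd'e

end Rewriting

/-- `stExp i = t_4 t^{S_i}` for the subsets `S_0, …, S_7 = ∅, {1}, {2}, {3}, {1,2}, {2,3}, {1,3},
{1,2,3}` of `{1,2,3}`; these are the pairs `i < j` with `S_i` and `S_j` incomparable. -/
def StIncomparable (i j : Fin 8) : Prop :=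
  (i, j) ∈ [(1, 2), (1, 3), (2, 3), (1, 5), (2, 6), (3, 4), (4, 5), (4, 6), (5, 6)]

def StChain (e : Fin 8 →₀ ℕ) : Prop := ∀ i j, StIncomparable i j → e i = 0 ∨ e j = 0

theorem linearCombination_stExp_apply (e : Fin 8 →₀ ℕ) :
    Finsupp.linearCombination ℕ stExp e 0 = e 1 + e 4 + e 6 + e 7 ∧
    Finsupp.linearCombination ℕ stExp e 1 = e 2 + e 4 + e 5 + e 7 ∧
    Finsupp.linearCombination ℕ stExp e 2 = e 3 + e 5 + e 6 + e 7 ∧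
    Finsupp.linearCombination ℕ stExp e 3 = e 0 + e 1 + e 2 + e 3 + e 4 + e 5 + e 6 + e 7 := by
  simp only [Finsupp.linearCombination_apply]
  rw [Finsupp.sum_fintype _ _ fun i => zero_smul ℕ (stExp i)]
  refine ⟨?_, ?_, ?_, ?_⟩ <;> simp [Fin.sum_univ_eight, stExp]

/-- In a chain `T_1 ⊆ ⋯ ⊆ T_r` of subsets of `{1,2,3}`, the number of members containing a set `U`
is the minimum over `t ∈ U` of the number `v t` of members containing `t`; inclusion–exclusion then
recovers the multiplicity of each subset from `v` and `r = v 3`. -/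
def stChainOfDegrees (v : Fin 4 →₀ ℕ) : Fin 8 →₀ ℕ :=
  let c012 := min (v 0) (min (v 1) (v 2))
  let c01 := min (v 0) (v 1) - c012
  let c12 := min (v 1) (v 2) - c012
  let c02 := min (v 0) (v 2) - c012
  let c0 := v 0 - c01 - c02 - c012
  let c1 := v 1 - c01 - c12 - c012
  let c2 := v 2 - c12 - c02 - c012
  Finsupp.equivFunOnFinite.symm
    ![v 3 - (c0 + c1 + c2 + c01 + c12 + c02 + c012), c0, c1, c2, c01, c12, c02, c012]

theorem min_add_add_eq_zero {a b c d : ℕ} (hac : a = 0 ∨ c = 0) (had : a = 0 ∨ d = 0)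
    (hbc : b = 0 ∨ c = 0) (hbd : b = 0 ∨ d = 0) : min (a + b) (c + d) = 0 := by
  omega

theorem StChain.min_linearCombination_stExp {e : Fin 8 →₀ ℕ} (he : StChain e) :
    let v := Finsupp.linearCombination ℕ stExp e
    min (v 0) (v 1) = e 4 + e 7 ∧ min (v 1) (v 2) = e 5 + e 7 ∧ min (v 0) (v 2) = e 6 + e 7 ∧
      min (v 0) (min (v 1) (v 2)) = e 7 := by
  have inc (i j : Fin 8) (h : StIncomparable i j := by simp [StIncomparable]) :
      e i = 0 ∨ e j = 0 := he i j h
  obtain ⟨h0, h1, h2, -⟩ := linearCombination_stExp_apply e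
  have m01 := min_add_add_eq_zero (inc 1 2) (inc 1 5) (inc 2 6).symm (inc 5 6).symm
  have m12 := min_add_add_eq_zero (inc 2 3) (inc 2 6) (inc 3 4).symm (inc 4 6)
  have m02 := min_add_add_eq_zero (inc 1 3) (inc 1 5) (inc 3 4).symm (inc 4 5)
  have m4 : min (e 4) (e 3 + e 5 + e 6) = 0 := by
    have := inc 3 4; have := inc 4 5; have := inc 4 6; omega
  simp only [h0, h1, h2]
  omega

theorem stChainOfDegrees_linearCombination {e : Fin 8 →₀ ℕ} (he : StChain e) :
    stChainOfDegrees (Finsupp.linearCombination ℕ stExp e) = e := by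
  obtain ⟨m01, m12, m02, m012⟩ := he.min_linearCombination_stExp
  obtain ⟨h0, h1, h2, h3⟩ := linearCombination_stExp_apply e
  simp only [stChainOfDegrees]
  rw [m012, m01, m12, m02, h0, h1, h2, h3]
  ext i
  fin_cases i <;>
    simp only [Fin.zero_eta, Fin.mk_one, Fin.reduceFinMk, Finsupp.equivFunOnFinite_symm_apply_apply,
      Matrix.cons_val, Matrix.cons_val_zero, Matrix.cons_val_one] <;>
    omega

theorem stChain_injOn : Set.InjOn (Finsupp.linearCombination ℕ stExp) {e | StChain e} :=
  fun e he e' he' h => by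
    rw [← stChainOfDegrees_linearCombination he, h, stChainOfDegrees_linearCombination he']

section

variable (K : Type) [Field K]

def stBinomialIdeal : Ideal (MvPolynomial (Fin 8) K) :=
  Ideal.span {(X 0 * X 4 - X 1 * X 2 : MvPolynomial (Fin 8) K),
    X 0 * X 5 - X 2 * X 3,
    X 0 * X 6 - X 1 * X 3,
    X 4 * X 5 - X 2 * X 7,
    X 5 * X 6 - X 3 * X 7,
    X 4 * X 6 - X 1 * X 7,
    X 0 * X 7 - X 3 * X 4,
    X 1 * X 5 - X 3 * X 4,
    X 2 * X 6 - X 3 * X 4}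

theorem stBinomialIdeal_le_toricIdeal : stBinomialIdeal K ≤ toricIdeal K stExp := by
  refine Ideal.span_le.2 ?_
  rintro g (rfl | rfl | rfl | rfl | rfl | rfl | rfl | rfl | rfl) <;>
    exact binomial_mem_toricIdeal stExp (by ext t; fin_cases t <;> simp [stExp])

theorem not_stIncomparable_self : ∀ i, ¬ StIncomparable i i := by
  unfold StIncomparable
  decide

/-- `|S_i| (3 - |S_i|)`: strictly concave in `|S_i|`, so replacing an incomparable pair by its meet
and join lowers it. -/
def stWeight : Fin 8 → ℕ := ![0, 2, 2, 2, 2, 2, 2, 0]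

theorem exists_mem_stBinomialIdeal_of_stIncomparable {i j : Fin 8} (h : StIncomparable i j) :
    ∃ k l, (X i * X j - X k * X l : MvPolynomial (Fin 8) K) ∈ stBinomialIdeal K ∧
      stWeight k + stWeight l < stWeight i + stWeight j := by
  have gen {g : MvPolynomial (Fin 8) K} (hg : g ∈ ({X 0 * X 4 - X 1 * X 2, X 0 * X 5 - X 2 * X 3,
      X 0 * X 6 - X 1 * X 3, X 4 * X 5 - X 2 * X 7, X 5 * X 6 - X 3 * X 7, X 4 * X 6 - X 1 * X 7,
      X 0 * X 7 - X 3 * X 4, X 1 * X 5 - X 3 * X 4, X 2 * X 6 - X 3 * X 4} : Set _) := by simp) :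
      g ∈ stBinomialIdeal K := Ideal.subset_span hg
  have of_sub_x3x4 {a b : Fin 8} (hab : X a * X b - X 3 * X 4 ∈ stBinomialIdeal K) :
      X a * X b - X 0 * X 7 ∈ stBinomialIdeal K := by
    have h := sub_mem hab (gen (g := X 0 * X 7 - X 3 * X 4))
    rwa [sub_sub_sub_cancel_right] at h
  simp only [StIncomparable, List.mem_cons, Prod.mk.injEq, List.not_mem_nil, or_false] at h
  rcases h with ⟨rfl, rfl⟩ | ⟨rfl, rfl⟩ | ⟨rfl, rfl⟩ | ⟨rfl, rfl⟩ | ⟨rfl, rfl⟩ | ⟨rfl, rfl⟩ |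
    ⟨rfl, rfl⟩ | ⟨rfl, rfl⟩ | ⟨rfl, rfl⟩
  · exact ⟨0, 4, sub_mem_comm_iff.1 gen, by decide⟩
  · exact ⟨0, 6, sub_mem_comm_iff.1 gen, by decide⟩
  · exact ⟨0, 5, sub_mem_comm_iff.1 gen, by decide⟩
  · exact ⟨0, 7, of_sub_x3x4 gen, by decide⟩
  · exact ⟨0, 7, of_sub_x3x4 gen, by decide⟩
  · exact ⟨0, 7, sub_mem_comm_iff.1 gen, by decide⟩
  · exact ⟨2, 7, gen, by decide⟩
  · exact ⟨1, 7, gen, by decide⟩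
  · exact ⟨3, 7, gen, by decide⟩

end

/-- **Example 1.7 (generators).**  The toric ideal of
`K[A] = K[t_4, t_1 t_4, t_2 t_4, t_3 t_4, t_1 t_2 t_4, t_2 t_3 t_4, t_1 t_3 t_4,
t_1 t_2 t_3 t_4]` is generated by the nine binomials `x_1 x_5 - x_2 x_3`,
`x_1 x_6 - x_3 x_4`, `x_1 x_7 - x_2 x_4`, `x_5 x_6 - x_3 x_8`,
`x_6 x_7 - x_4 x_8`, `x_5 x_7 - x_2 x_8`, `x_1 x_8 - x_4 x_5`,
`x_2 x_6 - x_4 x_5`, `x_3 x_7 - x_4 x_5` (variables 0-indexed below). -/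
theorem stableSet_toricIdeal_generators (K : Type) [Field K] :
    toricIdeal K stExp =
      Ideal.span {(X 0 * X 4 - X 1 * X 2 : MvPolynomial (Fin 8) K),
        X 0 * X 5 - X 2 * X 3,
        X 0 * X 6 - X 1 * X 3,
        X 4 * X 5 - X 2 * X 7,
        X 5 * X 6 - X 3 * X 7,
        X 4 * X 6 - X 1 * X 7,
        X 0 * X 7 - X 3 * X 4,
        X 1 * X 5 - X 3 * X 4,
        X 2 * X 6 - X 3 * X 4} :=
  toricIdeal_eq_of_normalForm stExp (stBinomialIdeal K) (stBinomialIdeal_le_toricIdeal K)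
    {e | StChain e}
    (exists_sub_mem_of_rewrite _ StIncomparable not_stIncomparable_self stWeight
      fun _ _ => exists_mem_stBinomialIdeal_of_stIncomparable K)
    stChain_injOn

end
end
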